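/- Let p ≥ 1 and let a, b be precision-p binary floating-point numbers with |a| ≥ |b|, let RN be a round-to-nearest function for precision p, and set x = RN(a + b) and y = RN(b − RN(x − a)). If x ≠ 0, then the second component satisfies |y| ≤ ulp(x)/2. -/
import Mathlib


/-- A precision-`p` binary floating-point number (unbounded exponent):
a real of the form `m * 2 ^ e` with `m e : ℤ` and `|m| < 2 ^ p`. -/
def FloatRep (p : ℕ) (x : ℝ) : Prop :=
  ∃ m e : ℤ, |m| < 2 ^ p ∧ x = (m : ℝ) * (2 : ℝ) ^ e

/-- `RN` is a round-to-nearest function for precision `p`: `RN x` is a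
precision-`p` float and is at least as close to `x` as any precision-`p`
float (ties broken arbitrarily). -/
def IsRoundNearest (p : ℕ) (RN : ℝ → ℝ) : Prop :=
  ∀ x : ℝ, FloatRep p (RN x) ∧ ∀ f : ℝ, FloatRep p f → |RN x - x| ≤ |f - x|

/-- For nonzero `x`, `ulp x = 2 ^ (⌊log₂ |x|⌋ - p + 1)`. -/
noncomputable def ulp (p : ℕ) (x : ℝ) : ℝ :=
  (2 : ℝ) ^ (Int.log 2 |x| - (p : ℤ) + 1)

namespace Fast2SumAux

lemma two_zpow_pos (k : ℤ) : (0:ℝ) < 2 ^ k := zpow_pos (by norm_num) k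

lemma cast_pow_eq (p : ℕ) : ((2:ℝ) ^ ((p:ℤ))) = ((2:ℤ) ^ p : ℤ) := by
  push_cast
  rw [zpow_natCast]

/-- any `m * 2^e` with `|m| ≤ 2^p` is a precision-`p` float (for `p ≥ 1`). -/
lemma float_of_le {p : ℕ} (hp : 1 ≤ p) {m e : ℤ} (hm : |m| ≤ 2 ^ p) :
    FloatRep p ((m : ℝ) * 2 ^ e) := by
  rcases lt_or_eq_of_le hm with h | h
  · exact ⟨m, e, h, rfl⟩
  · have h1 : (1:ℤ) < 2 ^ p := by
      have : (2:ℤ) ^ 1 ≤ 2 ^ p := pow_le_pow_right₀ (by norm_num) hp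
      omega
    rcases (abs_eq (by positivity : (0:ℤ) ≤ 2 ^ p)).mp h with h2 | h2
    · refine ⟨1, e + p, by simpa using h1, ?_⟩
      rw [h2]
      push_cast
      rw [zpow_add₀ (by norm_num : (2:ℝ) ≠ 0), zpow_natCast]
      ring
    · refine ⟨-1, e + p, by simpa using h1, ?_⟩
      rw [h2]
      push_cast
      rw [zpow_add₀ (by norm_num : (2:ℝ) ≠ 0), zpow_natCast]
      ring

lemma float_zero (p : ℕ) : FloatRep p 0 := ⟨0, 0, by positivity, by norm_num⟩

lemma rn_fix {p : ℕ} {RN : ℝ → ℝ} (hRN : IsRoundNearest p RN) {f : ℝ}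
    (hf : FloatRep p f) : RN f = f := by
  have h := (hRN f).2 f hf
  simp only [sub_self, abs_zero] at h
  have := abs_nonpos_iff.mp h
  linarith [sub_eq_zero.mp this, (sub_eq_zero (a := RN f) (b := f)).mp this]

/-- every nonzero float is an integer multiple of `2 ^ (log₂|c| - p + 1)`. -/
lemma float_mult {p : ℕ} {c : ℝ} (hc : FloatRep p c) (hc0 : c ≠ 0) :
    ∃ K : ℤ, c = (K : ℝ) * 2 ^ (Int.log 2 |c| - p + 1) := by
  obtain ⟨m, f, hm, rfl⟩ := hc
  set E := Int.log 2 |(m:ℝ) * 2 ^ f| with hE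
  set e := E - p + 1 with he
  by_cases hef : e ≤ f
  · refine ⟨m * 2 ^ (f - e).toNat, ?_⟩
    push_cast
    rw [← zpow_natCast (2:ℝ) (f - e).toNat, Int.toNat_of_nonneg (by omega), mul_assoc,
      ← zpow_add₀ (by norm_num : (2:ℝ) ≠ 0)]
    ring_nf
  · exfalso
    have hpos : (0:ℝ) < |(m:ℝ) * 2 ^ f| := abs_pos.mpr hc0
    have hlog : (2:ℝ) ^ E ≤ |(m:ℝ) * 2 ^ f| := by
      have := Int.zpow_log_le_self (b := 2) (by norm_num) hpos
      simpa [hE] using this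
    have hmr : |(m:ℝ)| < 2 ^ ((p:ℤ)) := by
      rw [cast_pow_eq]
      exact_mod_cast hm
    have h2 : |(m:ℝ) * 2 ^ f| < 2 ^ ((p:ℤ) + f) := by
      rw [abs_mul, abs_of_pos (two_zpow_pos f), zpow_add₀ (by norm_num : (2:ℝ) ≠ 0)]
      exact mul_lt_mul_of_pos_right hmr (two_zpow_pos f)
    have h3 : (2:ℝ) ^ ((p:ℤ) + f) ≤ 2 ^ E :=
      zpow_le_zpow_right₀ (by norm_num) (by omega)
    linarith

/-- a multiple of a coarse grid is a multiple of a finer grid. -/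
lemma mult_mono {c : ℝ} {f e : ℤ} (hef : e ≤ f) (K : ℤ) (hc : c = (K : ℝ) * 2 ^ f) :
    ∃ K' : ℤ, c = (K' : ℝ) * 2 ^ e := by
  refine ⟨K * 2 ^ (f - e).toNat, ?_⟩
  push_cast
  rw [← zpow_natCast (2:ℝ) (f - e).toNat, Int.toNat_of_nonneg (by omega), mul_assoc,
    ← zpow_add₀ (by norm_num : (2:ℝ) ≠ 0), hc]
  ring_nf

/-- there is a float within half-an-ulp of any nonzero real. -/
lemma exists_near {p : ℕ} (hp : 1 ≤ p) {z : ℝ} (hz : z ≠ 0) :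
    ∃ f : ℝ, FloatRep p f ∧ |f - z| ≤ 2 ^ (Int.log 2 |z| - p) := by
  set E := Int.log 2 |z| with hE
  set g : ℝ := 2 ^ (E - p + 1) with hg
  have hgpos : (0:ℝ) < g := two_zpow_pos _
  set m := round (z / g) with hm
  have h1 : |z / g - (m:ℝ)| ≤ 1 / 2 := abs_sub_round _
  have key : |(m:ℝ) * g - z| ≤ 2 ^ (E - (p:ℤ)) := by
    have hrw : (m:ℝ) * g - z = -((z / g - (m:ℝ)) * g) := by
      have hgne : g ≠ 0 := ne_of_gt hgpos
      field_simp
      ring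
    rw [hrw, abs_neg, abs_mul, abs_of_pos hgpos]
    have : |z / g - (m:ℝ)| * g ≤ (1/2) * g :=
      mul_le_mul_of_nonneg_right h1 (le_of_lt hgpos)
    calc |z / g - (m:ℝ)| * g ≤ (1/2) * g := this
      _ = 2 ^ (E - (p:ℤ)) := by
          rw [hg, show E - (p:ℤ) + 1 = (E - (p:ℤ)) + 1 by ring,
            zpow_add₀ (by norm_num : (2:ℝ) ≠ 0)]
          ring
  have hmb : |m| ≤ 2 ^ p := by
    have hzlt : |z| < 2 ^ (E + 1) := by
      have := Int.lt_zpow_succ_log_self (b := 2) (by norm_num) |z|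
      simpa [hE] using this
    have hzg : |z / g| < 2 ^ ((p:ℤ)) := by
      rw [abs_div, abs_of_pos hgpos, div_lt_iff₀ hgpos, hg,
        ← zpow_add₀ (by norm_num : (2:ℝ) ≠ 0)]
      have : (p:ℤ) + (E - p + 1) = E + 1 := by ring
      rw [this]; exact hzlt
    have hmr : |(m:ℝ)| ≤ |z / g| + 1/2 := by
      have := abs_sub_abs_le_abs_sub (m:ℝ) (z / g)
      have h2 := abs_sub_comm (z / g) (m:ℝ)
      rw [h2] at h1
      linarith
    have hfin : |(m:ℝ)| < 2 ^ ((p:ℤ)) + 1 := by linarith [hzg]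
    rw [cast_pow_eq] at hfin
    have h4 : |m| < 2 ^ p + 1 := by exact_mod_cast hfin
    omega
  exact ⟨(m:ℝ) * g, float_of_le hp hmb, key⟩

/-- half-ulp error bound for round to nearest. -/
lemma rn_err {p : ℕ} (hp : 1 ≤ p) {RN : ℝ → ℝ} (hRN : IsRoundNearest p RN) {z : ℝ}
    (hz : z ≠ 0) : |RN z - z| ≤ 2 ^ (Int.log 2 |z| - p) := by
  obtain ⟨f, hf, hnear⟩ := exists_near hp hz
  exact le_trans ((hRN z).2 f hf) hnear

/-- the rounded value is at least the power of two below `z`. -/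
lemma rn_mag {p : ℕ} (hp : 1 ≤ p) {RN : ℝ → ℝ} (hRN : IsRoundNearest p RN) {z : ℝ}
    (hz : z ≠ 0) : (2:ℝ) ^ (Int.log 2 |z|) ≤ |RN z| := by
  set E := Int.log 2 |z| with hE
  have hlog : (2:ℝ) ^ E ≤ |z| := Int.zpow_log_le_self (by norm_num) (abs_pos.mpr hz)
  have h1 : (1:ℤ) < 2 ^ p := by
    have : (2:ℤ) ^ 1 ≤ 2 ^ p := pow_le_pow_right₀ (by norm_num) hp
    omega
  rcases lt_or_gt_of_ne hz with hneg | hpos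
  · have hf : FloatRep p (-(2:ℝ) ^ E) := ⟨-1, E, by simpa using h1, by push_cast; ring⟩
    have h := (hRN z).2 _ hf
    have habs : |z| = -z := abs_of_neg hneg
    rw [habs] at hlog
    have hthis : |(-(2:ℝ) ^ E) - z| = -z - 2 ^ E := by
      rw [show (-(2:ℝ) ^ E) - z = -(2 ^ E + z) by ring, abs_neg,
        abs_of_nonpos (by linarith)]
      ring
    rw [hthis] at h
    have h2 : RN z - z ≤ -z - 2 ^ E := le_trans (le_abs_self _) h
    calc (2:ℝ) ^ E ≤ -(RN z) := by linarith
      _ ≤ |RN z| := neg_le_abs _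
  · have hf : FloatRep p ((2:ℝ) ^ E) := ⟨1, E, by simpa using h1, by push_cast; ring⟩
    have h := (hRN z).2 _ hf
    have habs : |z| = z := abs_of_pos hpos
    rw [habs] at hlog
    have hthis : |(2:ℝ) ^ E - z| = z - 2 ^ E := by
      rw [abs_sub_comm]
      exact abs_of_nonneg (by linarith)
    rw [hthis] at h
    have h4 : z - RN z ≤ |RN z - z| := by rw [abs_sub_comm]; exact le_abs_self _
    have h3 : 2 ^ E ≤ RN z := by linarith [le_trans h4 h]
    exact le_trans h3 (le_abs_self _)

/-- rounding preserves being a multiple of `2^e`. -/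
lemma rn_grid {p : ℕ} (hp : 1 ≤ p) {RN : ℝ → ℝ} (hRN : IsRoundNearest p RN)
    {z : ℝ} (K e : ℤ) (hz : z = (K : ℝ) * 2 ^ e) :
    ∃ K' : ℤ, RN z = (K' : ℝ) * 2 ^ e := by
  by_cases hK : |K| < 2 ^ p
  · rw [rn_fix hRN ⟨K, e, hK, hz⟩]; exact ⟨K, hz⟩
  · push_neg at hK
    have hKr : (2:ℝ) ^ ((p:ℤ)) ≤ |(K:ℝ)| := by
      rw [cast_pow_eq]
      exact_mod_cast hK
    have hzmag : (2:ℝ) ^ ((p:ℤ) + e) ≤ |z| := by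
      rw [hz, abs_mul, abs_of_pos (two_zpow_pos e), zpow_add₀ (by norm_num : (2:ℝ) ≠ 0)]
      exact mul_le_mul_of_nonneg_right hKr (le_of_lt (two_zpow_pos e))
    have hz0 : z ≠ 0 := by
      intro h; rw [h] at hzmag; simp at hzmag
      linarith [two_zpow_pos ((p:ℤ) + e), hzmag]
    have hE : (p:ℤ) + e ≤ Int.log 2 |z| :=
      (Int.zpow_le_iff_le_log (by norm_num) (abs_pos.mpr hz0)).mp (by exact_mod_cast hzmag)
    have hxmag : (2:ℝ) ^ ((p:ℤ) + e) ≤ |RN z| :=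
      le_trans (zpow_le_zpow_right₀ (by norm_num) hE) (rn_mag hp hRN hz0)
    have hx0 : RN z ≠ 0 := by
      intro h; rw [h] at hxmag; simp at hxmag
      linarith [two_zpow_pos ((p:ℤ) + e), hxmag]
    have hEx : (p:ℤ) + e ≤ Int.log 2 |RN z| :=
      (Int.zpow_le_iff_le_log (by norm_num) (abs_pos.mpr hx0)).mp (by exact_mod_cast hxmag)
    obtain ⟨K', hK'⟩ := float_mult (hRN z).1 hx0
    exact mult_mono (by omega) K' hK'

/-- from a real bound `|D * 2^e| ≤ 2^(p+e)` deduce the integer bound `|D| ≤ 2^p`. -/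
lemma int_le_of_real {D e : ℤ} {p : ℕ} (h : |(D:ℝ) * 2 ^ e| ≤ 2 ^ ((p:ℤ) + e)) :
    |D| ≤ 2 ^ p := by
  rw [abs_mul, abs_of_pos (two_zpow_pos e), zpow_add₀ (by norm_num : (2:ℝ) ≠ 0)] at h
  have h2 : |(D:ℝ)| ≤ 2 ^ ((p:ℤ)) :=
    le_of_mul_le_mul_right h (two_zpow_pos e)
  rw [cast_pow_eq] at h2
  exact_mod_cast h2

/-- The key exactness result: `RN (a + b) - a` is exactly representable. -/
lemma exact_sub {p : ℕ} (hp : 1 ≤ p) {RN : ℝ → ℝ} (hRN : IsRoundNearest p RN)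
    {a b : ℝ} (ha : FloatRep p a) (hb : FloatRep p b) (hab : |b| ≤ |a|)
    (hb0 : b ≠ 0) (hz0 : a + b ≠ 0) :
    FloatRep p (RN (a + b) - a) := by
  set z := a + b with hzdef
  set x := RN z with hxdef
  have ha0 : a ≠ 0 := by
    intro h
    rw [h, abs_zero] at hab
    exact hb0 (abs_nonpos_iff.mp hab)
  set Eb := Int.log 2 |b| with hEb
  set e := Eb - p + 1 with he
  obtain ⟨Kb, hKb⟩ := float_mult hb hb0
  rw [← hEb, ← he] at hKb
  -- |b| < 2^(p+e)
  have hblt : |b| < 2 ^ ((p:ℤ) + e) := by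
    have := Int.lt_zpow_succ_log_self (b := 2) (by norm_num) |b|
    have h2 : (p:ℤ) + e = Eb + 1 := by omega
    rw [h2]
    simpa [hEb] using this
  -- |Kb| ≤ 2^p - 1, so realwise |b| ≤ 2^(p+e) - 2^e
  have hKbb : |Kb| < 2 ^ p := by
    by_contra hcon
    push_neg at hcon
    have hKr : (2:ℝ) ^ ((p:ℤ)) ≤ |(Kb:ℝ)| := by
      rw [cast_pow_eq]; exact_mod_cast hcon
    have : (2:ℝ) ^ ((p:ℤ) + e) ≤ |b| := by
      rw [hKb, abs_mul, abs_of_pos (two_zpow_pos e), zpow_add₀ (by norm_num : (2:ℝ) ≠ 0)]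
      exact mul_le_mul_of_nonneg_right hKr (le_of_lt (two_zpow_pos e))
    linarith
  have hble : |b| ≤ 2 ^ ((p:ℤ) + e) - 2 ^ e := by
    have hKb1 : |Kb| ≤ 2 ^ p - 1 := by omega
    have hKr : |(Kb:ℝ)| ≤ 2 ^ ((p:ℤ)) - 1 := by
      rw [cast_pow_eq]
      have h5 : ((|Kb| : ℤ) : ℝ) ≤ (((2:ℤ) ^ p - 1 : ℤ) : ℝ) := by exact_mod_cast hKb1
      rw [Int.cast_abs] at h5
      push_cast at h5 ⊢
      linarith
    have habsb : |b| = |(Kb:ℝ)| * 2 ^ e := by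
      rw [hKb, abs_mul, abs_of_pos (two_zpow_pos e)]
    calc |b| = |(Kb:ℝ)| * 2 ^ e := habsb
      _ ≤ (2 ^ ((p:ℤ)) - 1) * 2 ^ e :=
          mul_le_mul_of_nonneg_right hKr (le_of_lt (two_zpow_pos e))
      _ = 2 ^ ((p:ℤ) + e) - 2 ^ e := by
          have hsplit : (2:ℝ) ^ ((p:ℤ) + e) = 2 ^ ((p:ℤ)) * 2 ^ e :=
            zpow_add₀ (by norm_num : (2:ℝ) ≠ 0) _ _
          rw [hsplit, sub_mul, one_mul]
  -- a is a multiple of 2^e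
  have hEab : Eb ≤ Int.log 2 |a| := Int.log_mono_right (abs_pos.mpr hb0) hab
  obtain ⟨Ka', hKa'⟩ := float_mult ha ha0
  obtain ⟨Ka, hKa⟩ := mult_mono (show e ≤ Int.log 2 |a| - p + 1 by omega) Ka' hKa'
  -- x is a multiple of 2^e
  have hzeq : z = ((Ka + Kb : ℤ) : ℝ) * 2 ^ e := by
    rw [hzdef, hKa, hKb]; push_cast; ring
  obtain ⟨Kx, hKx⟩ := rn_grid hp hRN (Ka + Kb) e hzeq
  rw [← hxdef] at hKx
  -- |x - z| ≤ |b|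
  have hdb : |x - z| ≤ |b| := by
    have h := (hRN z).2 a ha
    have : |a - z| = |b| := by rw [hzdef, show a - (a + b) = -b by ring, abs_neg]
    rw [this] at h
    exact h
  by_cases hK : |Ka + Kb| < 2 ^ p
  · -- z itself is a float
    have hxz : x = z := by rw [hxdef]; exact rn_fix hRN ⟨Ka + Kb, e, hK, hzeq⟩
    rw [hxz, hzdef, show a + b - a = b by ring]
    exact hb
  · push_neg at hK
    have hKr : (2:ℝ) ^ ((p:ℤ)) ≤ |((Ka + Kb : ℤ):ℝ)| := by
      rw [cast_pow_eq]; exact_mod_cast hK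
    have hzmag : (2:ℝ) ^ ((p:ℤ) + e) ≤ |z| := by
      rw [hzeq, abs_mul, abs_of_pos (two_zpow_pos e),
        zpow_add₀ (by norm_num : (2:ℝ) ≠ 0)]
      exact mul_le_mul_of_nonneg_right hKr (le_of_lt (two_zpow_pos e))
    set E := Int.log 2 |z| with hE
    have hEz : (p:ℤ) + e ≤ E :=
      (Int.zpow_le_iff_le_log (by norm_num) (abs_pos.mpr hz0)).mp (by exact_mod_cast hzmag)
    have hdu : |x - z| ≤ 2 ^ (E - p) := rn_err hp hRN hz0
    by_cases hE2 : E = (p:ℤ) + e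
    · -- subcase B1 : |x - z| ≤ 2^e
      have hde : |x - z| ≤ 2 ^ e := by
        rw [hE2, show (p:ℤ) + e - p = e by ring] at hdu
        exact hdu
      have hxa : x - a = ((Kx - Ka : ℤ):ℝ) * 2 ^ e := by
        rw [hKx, hKa]; push_cast; ring
      have hbound : |x - a| ≤ 2 ^ ((p:ℤ) + e) := by
        have : x - a = (x - z) + b := by rw [hzdef]; ring
        rw [this]
        calc |(x - z) + b| ≤ |x - z| + |b| := abs_add_le _ _
          _ ≤ 2 ^ e + (2 ^ ((p:ℤ) + e) - 2 ^ e) := by linarith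
          _ = 2 ^ ((p:ℤ) + e) := by ring
      rw [hxa] at hbound ⊢
      exact float_of_le hp (int_le_of_real hbound)
    · -- subcase B2 : E ≥ p + e + 1
      have hE3 : (p:ℤ) + e + 1 ≤ E := by omega
      have hz2 : (2:ℝ) ^ ((p:ℤ) + e + 1) ≤ |z| :=
        le_trans (zpow_le_zpow_right₀ (by norm_num) hE3)
          (Int.zpow_log_le_self (by norm_num) (abs_pos.mpr hz0))
      -- |a| ≥ 2^(p+e), so a is a multiple of 2^(e+1)
      have hamag : (2:ℝ) ^ ((p:ℤ) + e) ≤ |a| := by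
        have h1 : |z| ≤ |a| + |b| := by rw [hzdef]; exact abs_add_le _ _
        have h2 : (2:ℝ) ^ ((p:ℤ) + e + 1) = 2 * 2 ^ ((p:ℤ) + e) := by
          rw [zpow_add₀ (by norm_num : (2:ℝ) ≠ 0)]; ring
        linarith
      have hEa2 : (p:ℤ) + e ≤ Int.log 2 |a| :=
        (Int.zpow_le_iff_le_log (by norm_num) (abs_pos.mpr ha0)).mp (by exact_mod_cast hamag)
      obtain ⟨Ka2, hKa2⟩ := mult_mono (show e + 1 ≤ Int.log 2 |a| - p + 1 by omega) Ka' hKa'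
      -- |x| ≥ 2^(p+e+1), so x is a multiple of 2^(e+1)
      have hxmag : (2:ℝ) ^ ((p:ℤ) + e + 1) ≤ |x| :=
        le_trans (zpow_le_zpow_right₀ (by norm_num) hE3) (rn_mag hp hRN hz0)
      have hx0 : x ≠ 0 := by
        intro h; rw [h, abs_zero] at hxmag
        linarith [two_zpow_pos ((p:ℤ) + e + 1)]
      have hEx2 : (p:ℤ) + e + 1 ≤ Int.log 2 |x| :=
        (Int.zpow_le_iff_le_log (by norm_num) (abs_pos.mpr hx0)).mp (by exact_mod_cast hxmag)
      have hxf : FloatRep p x := by rw [hxdef]; exact (hRN z).1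
      obtain ⟨Kx', hKx'⟩ := float_mult hxf hx0
      obtain ⟨Kx2, hKx2⟩ := mult_mono (show e + 1 ≤ Int.log 2 |x| - p + 1 by omega)
        Kx' hKx' 
      have hxa : x - a = ((Kx2 - Ka2 : ℤ):ℝ) * 2 ^ (e + 1) := by
        rw [hKx2, hKa2]; push_cast; ring
      have hbound : |x - a| ≤ 2 ^ ((p:ℤ) + (e + 1)) := by
        have h4 : x - a = (x - z) + b := by rw [hzdef]; ring
        have h5 : (2:ℝ) ^ ((p:ℤ) + (e + 1)) = 2 * 2 ^ ((p:ℤ) + e) := by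
          rw [show (p:ℤ) + (e + 1) = ((p:ℤ) + e) + 1 by ring,
            zpow_add₀ (by norm_num : (2:ℝ) ≠ 0)]; ring
        rw [h4]
        calc |(x - z) + b| ≤ |x - z| + |b| := abs_add_le _ _
          _ ≤ |b| + |b| := by linarith
          _ ≤ 2 ^ ((p:ℤ) + (e + 1)) := by rw [h5]; linarith
      rw [hxa] at hbound ⊢
      exact float_of_le hp (int_le_of_real hbound)

end Fast2SumAux

open Fast2SumAux in
/-- In Fast2Sum, the second component is bounded by half an ulp of the first. -/
theorem fast2sum_snd_le_half_ulp (p : ℕ) (hp : 1 ≤ p) (RN : ℝ → ℝ)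
    (hRN : IsRoundNearest p RN) (a b : ℝ)
    (ha : FloatRep p a) (hb : FloatRep p b) (hab : |b| ≤ |a|)
    (x y : ℝ) (hx : x = RN (a + b)) (hy : y = RN (b - RN (x - a)))
    (hx0 : x ≠ 0) :
    |y| ≤ ulp p x / 2 := by
  have hupos : (0:ℝ) < ulp p x / 2 := by
    unfold ulp; positivity
  by_cases hb0 : b = 0
  · -- trivial case
    subst hb0
    rw [add_zero] at hx
    have hxa : x = a := by rw [hx, rn_fix hRN ha]
    have h1 : RN (x - a) = 0 := by
      rw [hxa, sub_self, rn_fix hRN (float_zero p)]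
    rw [hy, h1, zero_sub, neg_zero, rn_fix hRN (float_zero p), abs_zero]
    linarith
  · have hz0 : a + b ≠ 0 := by
      intro h
      apply hx0
      rw [hx, h, rn_fix hRN (float_zero p)]
    have hfloat : FloatRep p (x - a) := by
      rw [hx]; exact exact_sub hp hRN ha hb hab hb0 hz0
    have hs : RN (x - a) = x - a := rn_fix hRN hfloat
    set Ex := Int.log 2 |x| with hEx
    have hulp : ulp p x / 2 = 2 ^ (Ex - p) := by
      unfold ulp
      rw [← hEx, show Ex - (p:ℤ) + 1 = (Ex - p) + 1 by ring,
        zpow_add₀ (by norm_num : (2:ℝ) ≠ 0)]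
      ring
    -- |b - (x - a)| = |(a+b) - x| ≤ 2^(Ez - p) ≤ 2^(Ex - p)
    have hEzx : Int.log 2 |a + b| ≤ Ex := by
      have h1 : (2:ℝ) ^ (Int.log 2 |a + b|) ≤ |x| := by
        rw [hx]; exact rn_mag hp hRN hz0
      exact (Int.zpow_le_iff_le_log (by norm_num) (abs_pos.mpr hx0)).mp (by exact_mod_cast h1)
    have ht : |b - (x - a)| ≤ 2 ^ (Ex - (p:ℤ)) := by
      have h1 : |x - (a + b)| ≤ 2 ^ (Int.log 2 |a + b| - p) := by
        rw [hx]; exact rn_err hp hRN hz0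
      have h2 : b - (x - a) = -(x - (a + b)) := by ring
      rw [h2, abs_neg]
      exact le_trans h1 (zpow_le_zpow_right₀ (by norm_num) (by omega))
    -- now bound |RN t| for |t| ≤ u with u = 2^(Ex - p) a float
    set u : ℝ := 2 ^ (Ex - (p:ℤ)) with hu
    have h1p : (1:ℤ) < 2 ^ p := by
      have : (2:ℤ) ^ 1 ≤ 2 ^ p := pow_le_pow_right₀ (by norm_num) hp
      omega
    have hfu : FloatRep p u := ⟨1, Ex - p, by simpa using h1p, by push_cast; ring⟩
    have hfnu : FloatRep p (-u) := ⟨-1, Ex - p, by simpa using h1p, by push_cast; ring⟩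
    set t := b - RN (x - a) with htdef
    have ht' : |t| ≤ u := by rw [htdef, hs]; exact ht
    have hw1 := (hRN t).2 u hfu
    have hw2 := (hRN t).2 (-u) hfnu
    rw [hy, hulp]
    obtain ⟨htl, htr⟩ := abs_le.mp ht'
    have e1 : |u - t| = u - t := abs_of_nonneg (by linarith)
    have e2 : |(-u) - t| = u + t := by
      rw [show (-u) - t = -(u + t) by ring, abs_neg]
      exact abs_of_nonneg (by linarith)
    rw [e1] at hw1
    rw [e2] at hw2
    have hc1 : RN t - t ≤ u - t := le_trans (le_abs_self _) hw1
    have h4 : t - RN t ≤ |RN t - t| := by rw [abs_sub_comm]; exact le_abs_self _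
    have hc2 : t - RN t ≤ u + t := le_trans h4 hw2
    exact abs_le.mpr ⟨by linarith, by linarith⟩
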